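/- arXiv:2403.11940 — 5 statements merged into one kernel-verified Lean document; each statement's English description precedes it below -/
import Mathlib

section
/- Let B = {b_1, ..., b_k} be a finite set of positive integers with gcd(B) = 1, smallest element b_1 and largest element b_k. Then every integer n ≥ (b_1 - 1)(b_k - 1) can be written as a non-negative integer combination n = Σ a_i b_i with a_i ∈ ℕ. -/
/-!
Work modulo `b₁`. Since `b₁ ∈ B`, the image `s` of `B` in `ZMod b₁` contains `0`, and by
Bézout it generates `ZMod b₁`. The iterated sumsets `k • s` of such a set increase strictly
until they fill the group, so `(b₁ - 1) • s` is everything: every residue class contains a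
sum `t` of `b₁ - 1` elements of `B`, hence `t ≤ (b₁ - 1) b_k`. For `n ≥ (b₁ - 1)(b_k - 1)`
the sum `t ≡ n` is then at most `n`, and `n = t + q b₁`.
-/

open scoped Pointwise Finset

theorem Finset.gcd_natCast {α : Type*} (s : Finset α) (f : α → ℕ) :
    s.gcd (fun a => (f a : ℤ)) = ((s.gcd f : ℕ) : ℤ) := by
  classical
  induction s using Finset.induction_on with
  | empty => simp
  | insert a s _ ih =>
    rw [gcd_insert, gcd_insert, ih, ← Int.coe_gcd, Int.gcd_natCast_natCast]
    rfl

section FiniteMonoid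

variable {G : Type*} [AddMonoid G] [DecidableEq G] {s : Finset G}

theorem Finset.mem_nsmul_of_mem_closure_of_succ_nsmul_eq (hs : 0 ∈ s) {k : ℕ}
    (h : (k + 1) • s = k • s) {x : G} (hx : x ∈ AddSubmonoid.closure (s : Set G)) :
    x ∈ k • s := by
  induction hx using AddSubmonoid.closure_induction_left with
  | zero => exact Finset.zero_mem_nsmul hs
  | add_left x hx y _ hy =>
    rw [← h, succ_nsmul']
    exact Finset.add_mem_add hx hy

variable [Fintype G]

theorem Finset.min_card_le_card_nsmul (hs : 0 ∈ s) (hgen : AddSubmonoid.closure (s : Set G) = ⊤)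
    (k : ℕ) : min (k + 1) (Fintype.card G) ≤ #(k • s) := by
  induction k with
  | zero => simp
  | succ k ih =>
    have hsub : k • s ⊆ (k + 1) • s := Finset.nsmul_subset_nsmul_right hs k.le_succ
    by_cases heq : (k + 1) • s = k • s
    · have : k • s = Finset.univ := Finset.eq_univ_of_forall fun x =>
        Finset.mem_nsmul_of_mem_closure_of_succ_nsmul_eq hs heq (hgen ▸ AddSubmonoid.mem_top x)
      rw [heq, this, Finset.card_univ]
      exact min_le_right _ _
    · have := Finset.card_lt_card (Finset.ssubset_iff_subset_ne.2 ⟨hsub, Ne.symm heq⟩)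
      omega

theorem Finset.card_sub_one_nsmul_eq_univ (hs : 0 ∈ s)
    (hgen : AddSubmonoid.closure (s : Set G) = ⊤) : (Fintype.card G - 1) • s = Finset.univ := by
  refine Finset.eq_univ_of_card _ (le_antisymm (Finset.card_le_univ _) ?_)
  have := Finset.min_card_le_card_nsmul hs hgen (Fintype.card G - 1)
  have : 0 < Fintype.card G := Fintype.card_pos_iff.2 ⟨0⟩
  omega

end FiniteMonoid

theorem ZMod.closure_image_natCast_eq_top {m : ℕ} [NeZero m] {B : Finset ℕ}
    (hgcd : B.gcd id = 1) :
    AddSubmonoid.closure (B.image (Nat.cast : ℕ → ZMod m) : Set (ZMod m)) = ⊤ := by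
  set S := AddSubmonoid.closure (B.image (Nat.cast : ℕ → ZMod m) : Set (ZMod m))
  obtain ⟨g, hg⟩ := Finset.gcd_eq_sum_mul B (fun b => ((id b : ℕ) : ℤ))
  rw [Finset.gcd_natCast, hgcd] at hg
  have hone : (1 : ZMod m) ∈ S := by
    have := congrArg (Int.cast : ℤ → ZMod m) hg
    push_cast at this
    rw [this]
    refine sum_mem fun b hb => ?_
    rw [← ZMod.natCast_zmod_val (g b : ZMod m), ← nsmul_eq_mul']
    exact nsmul_mem
      (AddSubmonoid.subset_closure (Finset.mem_coe.2 (Finset.mem_image_of_mem _ hb))) _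
  refine eq_top_iff.2 fun x _ => ?_
  rw [← ZMod.natCast_zmod_val x, ← nsmul_one]
  exact nsmul_mem hone _

theorem exists_mem_closure_le_natCast_eq_of_mem_nsmul_image {R : Type*} [AddMonoidWithOne R]
    [DecidableEq R] {B : Finset ℕ} {M : ℕ} (hM : ∀ b ∈ B, b ≤ M) (k : ℕ) {x : R}
    (hx : x ∈ k • B.image (Nat.cast : ℕ → R)) :
    ∃ t ∈ AddSubmonoid.closure (B : Set ℕ), t ≤ k * M ∧ (t : R) = x := by
  induction k generalizing x with
  | zero =>
    rw [zero_nsmul, Finset.mem_zero] at hx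
    exact ⟨0, zero_mem _, Nat.zero_le _, by rw [hx, Nat.cast_zero]⟩
  | succ k ih =>
    rw [succ_nsmul, Finset.mem_add] at hx
    obtain ⟨y, hy, z, hz, rfl⟩ := hx
    obtain ⟨t, ht, htle, rfl⟩ := ih hy
    obtain ⟨b, hb, rfl⟩ := Finset.mem_image.1 hz
    refine ⟨t + b, add_mem ht (AddSubmonoid.subset_closure hb), ?_, Nat.cast_add t b⟩
    rw [add_mul, one_mul]
    exact add_le_add htle (hM b hb)

theorem AddSubmonoid.mem_of_modEq_of_le {S : AddSubmonoid ℕ} {b t n : ℕ} (hb : b ∈ S)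
    (ht : t ∈ S) (hle : t ≤ n) (hmod : t ≡ n [MOD b]) : n ∈ S := by
  obtain ⟨q, hq⟩ := (Nat.modEq_iff_dvd' hle).1 hmod
  rw [← Nat.add_sub_cancel' hle, hq, mul_comm, ← smul_eq_mul]
  exact add_mem ht (nsmul_mem hb q)

theorem exists_mem_closure_le_modEq_min' (B : Finset ℕ) (hB : B.Nonempty) (hmin : 0 < B.min' hB)
    (hgcd : B.gcd id = 1) (n : ℕ) :
    ∃ t ∈ AddSubmonoid.closure (B : Set ℕ),
      t ≤ (B.min' hB - 1) * B.max' hB ∧ t ≡ n [MOD B.min' hB] := by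
  set m := B.min' hB
  have : NeZero m := ⟨hmin.ne'⟩
  have hzero : (0 : ZMod m) ∈ B.image (Nat.cast : ℕ → ZMod m) :=
    Finset.mem_image.2 ⟨m, B.min'_mem hB, ZMod.natCast_self m⟩
  have huniv := Finset.card_sub_one_nsmul_eq_univ hzero (ZMod.closure_image_natCast_eq_top hgcd)
  rw [ZMod.card] at huniv
  obtain ⟨t, ht, htle, htn⟩ := exists_mem_closure_le_natCast_eq_of_mem_nsmul_image
    (M := B.max' hB) (fun b hb => B.le_max' b hb) (m - 1) (huniv ▸ Finset.mem_univ (n : ZMod m))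
  exact ⟨t, ht, htle, (ZMod.natCast_eq_natCast_iff _ _ _).1 htn⟩

/-- Schur's theorem on numerical semigroups: if `B` is a nonempty finite set of positive
integers with gcd 1, smallest element `b₁` and largest element `b_k`, then every
`n ≥ (b₁ - 1)(b_k - 1)` is a nonnegative integer combination of elements of `B`. -/
theorem schur_numerical_semigroup (B : Finset ℕ) (hB : B.Nonempty)
    (hpos : ∀ b ∈ B, 0 < b) (hgcd : B.gcd id = 1) (n : ℕ)
    (hn : (B.min' hB - 1) * (B.max' hB - 1) ≤ n) :
    ∃ a : ℕ → ℕ, n = ∑ b ∈ B, a b * b := by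
  have hmin := hpos _ (B.min'_mem hB)
  obtain ⟨t, ht, htle, htn⟩ := exists_mem_closure_le_modEq_min' B hB hmin hgcd n
  have hlt : t < n + B.min' hB := by
    have := Nat.mul_sub_one (B.min' hB - 1) (B.max' hB)
    have := B.min'_le_max' hB
    omega
  have hmem : n ∈ AddSubmonoid.closure (B : Set ℕ) :=
    AddSubmonoid.mem_of_modEq_of_le (AddSubmonoid.subset_closure (B.min'_mem hB)) ht
      (htn.le_of_lt_add hlt) htn
  obtain ⟨a, -, ha⟩ := AddSubmonoid.mem_closure_finset.1 hmem
  exact ⟨a, by simpa only [smul_eq_mul] using ha.symm⟩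
end

section
/- Let G be a strongly connected directed graph (every vertex has out-degree at least 1) on a finite vertex set, with diameter at most D (there is a directed path of length at most D between any ordered pair of vertices), and suppose G is aperiodic (the gcd of the lengths of all closed walks through any fixed vertex is 1). Then for any vertex a, there exists a set Q of closed walks through a such that every walk in Q has length at most 2D+1, at least one walk in Q has length at most D+1, and the gcd of the lengths of the walks in Q is 1. -/
/-!
Fix for every vertex `u` a walk `a ⟶ u` of length `s u ≤ D` and a walk `u ⟶ a` of length
`r u ≤ D`. Every edge `u ⟶ v` yields the closed walk `a ⟶ u ⟶ v ⟶ a` of length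
`s u + 1 + r v ≤ 2D + 1`, and every vertex the closed walk `a ⟶ u ⟶ a` of length `s u + r u`.
If `d` divides all closed walk lengths up to `2D + 1`, subtracting gives `r u ≡ r v + 1 (mod d)`
along every edge, so `-r` is a potential increasing by one per step modulo `d`, and any closed
walk through `a` has length divisible by `d`. Aperiodicity then forces `d = 1`.
-/

/-- There is a directed walk of length `k` from `u` to `v` along relation `R`. -/
def HasWalk {V : Type*} (R : V → V → Prop) (u v : V) (k : ℕ) : Prop :=
  ∃ f : ℕ → V, f 0 = u ∧ f k = v ∧ ∀ i < k, R (f i) (f (i + 1))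

namespace HasWalk

variable {V : Type*} {R : V → V → Prop} {u v w : V} {k l : ℕ}

theorem zero_iff : HasWalk R u v 0 ↔ u = v := by
  constructor
  · rintro ⟨f, rfl, rfl, -⟩
    rfl
  · rintro rfl
    exact ⟨fun _ => u, rfl, rfl, by simp⟩

theorem succ_iff : HasWalk R u w (k + 1) ↔ ∃ v, HasWalk R u v k ∧ R v w := by
  constructor
  · rintro ⟨f, hf0, hfk, hf⟩
    exact ⟨f k, ⟨f, hf0, rfl, fun i hi => hf i (by omega)⟩, hfk ▸ hf k (by omega)⟩
  · rintro ⟨v, ⟨f, hf0, hfk, hf⟩, hvw⟩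
    refine ⟨fun i => if i ≤ k then f i else w, by simp [hf0], by simp, fun i hi => ?_⟩
    rcases Nat.lt_or_ge i k with hik | hik
    · simpa [hik.le, Nat.succ_le_of_lt hik] using hf i hik
    · obtain rfl : i = k := by omega
      simpa [hfk] using hvw

theorem single (h : R u v) : HasWalk R u v 1 :=
  succ_iff.2 ⟨u, zero_iff.2 rfl, h⟩

theorem append (h₁ : HasWalk R u v k) (h₂ : HasWalk R v w l) : HasWalk R u w (k + l) := by
  induction l generalizing w with
  | zero => rwa [← zero_iff.1 h₂]
  | succ l ih =>
    obtain ⟨x, hvx, hxw⟩ := succ_iff.1 h₂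
    exact succ_iff.2 ⟨x, ih hvx, hxw⟩

theorem potential_eq {G : Type*} [AddMonoid G] {p : V → G} {c : G}
    (hp : ∀ x y, R x y → p y = p x + c) (h : HasWalk R u w k) : p w = p u + k • c := by
  induction k generalizing w with
  | zero => simp [zero_iff.1 h]
  | succ k ih =>
    obtain ⟨v, huv, hvw⟩ := succ_iff.1 h
    rw [hp v w hvw, ih huv, succ_nsmul, add_assoc]

end HasWalk

theorem dvd_of_forall_dvd_short_closed_walks {V : Type*} {R : V → V → Prop} {D d k : ℕ} {a : V}
    (hdiam : ∀ u v : V, ∃ k ≤ D, HasWalk R u v k)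
    (hd : ∀ q, 0 < q → q ≤ 2 * D + 1 → HasWalk R a a q → d ∣ q)
    (hk : HasWalk R a a k) : d ∣ k := by
  choose s hsD hsW using hdiam a
  choose r hrD hrW using fun u => hdiam u a
  have hzero : ∀ q ≤ 2 * D + 1, HasWalk R a a q → (q : ZMod d) = 0 := fun q hq hw => by
    rcases Nat.eq_zero_or_pos q with rfl | hpos
    · exact Nat.cast_zero
    · exact (ZMod.natCast_eq_zero_iff q d).2 (hd q hpos hq hw)
  have hedge : ∀ u v, R u v → -(r v : ZMod d) = -(r u : ZMod d) + 1 := fun u v huv => by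
    have through_edge : ((s u + 1 + r v : ℕ) : ZMod d) = 0 :=
      hzero _ (by linarith [hsD u, hrD v]) (((hsW u).append (.single huv)).append (hrW v))
    have through_vertex : ((s u + r u : ℕ) : ZMod d) = 0 :=
      hzero _ (by linarith [hsD u, hrD u]) ((hsW u).append (hrW u))
    push_cast at through_edge through_vertex
    linear_combination through_vertex - through_edge
  have := hk.potential_eq hedge
  rwa [left_eq_add, nsmul_one, ZMod.natCast_eq_zero_iff] at this

theorem exists_short_loops_gcd_one_general {V : Type*} (R : V → V → Prop) (D : ℕ)
    (hout : ∀ u : V, ∃ v, R u v)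
    (hdiam : ∀ u v : V, ∃ k ≤ D, HasWalk R u v k)
    (haper : ∀ (a : V) (d : ℕ), (∀ k, 0 < k → HasWalk R a a k → d ∣ k) → d = 1)
    (a : V) :
    ∃ Q : Finset ℕ, Q.Nonempty ∧
      (∀ q ∈ Q, 0 < q ∧ q ≤ 2 * D + 1 ∧ HasWalk R a a q) ∧
      (∃ q ∈ Q, q ≤ D + 1) ∧ Q.gcd id = 1 := by
  classical
  set Q := (Finset.Icc 1 (2 * D + 1)).filter (HasWalk R a a)
  have mem_Q : ∀ q, q ∈ Q ↔ 0 < q ∧ q ≤ 2 * D + 1 ∧ HasWalk R a a q := fun q => by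
    simp only [Q, Finset.mem_filter, Finset.mem_Icc, Nat.one_le_iff_ne_zero, Nat.pos_iff_ne_zero,
      and_assoc]
  obtain ⟨b, hab⟩ := hout a
  obtain ⟨k, hkD, hba⟩ := hdiam b a
  have short_mem : 1 + k ∈ Q := (mem_Q _).2 ⟨by omega, by omega, (HasWalk.single hab).append hba⟩
  refine ⟨Q, ⟨_, short_mem⟩, fun q => (mem_Q q).1, ⟨_, short_mem, by omega⟩, ?_⟩
  refine haper a _ fun k _ hk => dvd_of_forall_dvd_short_closed_walks hdiam (fun q hq hqD hw => ?_) hk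
  exact Finset.gcd_dvd ((mem_Q q).2 ⟨hq, hqD, hw⟩)

/-- In a finite, strongly connected (diameter at most D), aperiodic directed graph with
out-degree at least 1 everywhere, every vertex `a` has a finite set `Q` of closed-walk
lengths, each positive and at most `2D+1`, one of which is at most `D+1`, with gcd 1. -/
theorem exists_short_loops_gcd_one {V : Type*} [Fintype V] (R : V → V → Prop) (D : ℕ)
    (hout : ∀ u : V, ∃ v, R u v)
    (hdiam : ∀ u v : V, ∃ k ≤ D, HasWalk R u v k)
    (haper : ∀ (a : V) (d : ℕ), (∀ k, 0 < k → HasWalk R a a k → d ∣ k) → d = 1)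
    (a : V) :
    ∃ Q : Finset ℕ, Q.Nonempty ∧
      (∀ q ∈ Q, 0 < q ∧ q ≤ 2 * D + 1 ∧ HasWalk R a a q) ∧
      (∃ q ∈ Q, q ≤ D + 1) ∧ Q.gcd id = 1 :=
  exists_short_loops_gcd_one_general R D hout hdiam haper a
end

section
/- Let G be a strongly connected, aperiodic directed graph on a finite vertex set with diameter at most D. Then for any vertex a and any integer n ≥ 2D², there exists a closed walk through a of length exactly n. -/
/-!
Fix `a` and let `q v ≤ D` be the length of a walk from `v` back to `a`. If `d` divides the
length of every closed walk through `a` of length at most `2D + 1`, then modulo `d` the function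
`-q` rises by one along each edge, so `d` divides every closed-walk length and aperiodicity
gives `d = 1`.

One step out of `a` and back gives a closed walk of length `L ≤ D + 1`. The short closed-walk
lengths then generate `ZMod L`, and the sumsets `k • s` of a generating set `s ∋ 0` grow strictly
until they are closed under adding `s`, i.e. until they fill the group; so `L - 1` summands
suffice. Every residue modulo `L` is thus the length of a closed walk of length at most
`(L - 1)(2D + 1) ≤ 2D² + L - 1`, and padding it with copies of the loop of length `L` reaches
every `n ≥ 2D²`.
-/

open Pointwise

section Walks

variable {V : Type*} {R : V → V → Prop} {u v w : V} {j k : ℕ}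

theorem hasWalk_zero_iff : HasWalk R u v 0 ↔ u = v :=
  ⟨fun ⟨_, h0, hv, _⟩ => h0 ▸ hv, fun h => ⟨fun _ => u, rfl, h, by simp⟩⟩

theorem hasWalk_succ_iff : HasWalk R u w (k + 1) ↔ ∃ v, HasWalk R u v k ∧ R v w := by
  constructor
  · rintro ⟨f, hf0, hfk, hf⟩
    exact ⟨f k, ⟨f, hf0, rfl, fun i hi => hf i (by omega)⟩, hfk ▸ hf k k.lt_succ_self⟩
  · rintro ⟨v, ⟨f, hf0, hfk, hf⟩, hvw⟩
    refine ⟨fun i => if i ≤ k then f i else w, by simp [hf0], by simp, fun i hi => ?_⟩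
    rcases (Nat.lt_succ_iff.mp hi).lt_or_eq with hik | rfl
    · simpa [hik.le, Nat.succ_le_of_lt hik] using hf i hik
    · simpa [hfk] using hvw

theorem hasWalk_one_of_rel (h : R u v) : HasWalk R u v 1 :=
  hasWalk_succ_iff.mpr ⟨u, hasWalk_zero_iff.mpr rfl, h⟩

theorem HasWalk.append_s2 (h₁ : HasWalk R u v j) (h₂ : HasWalk R v w k) :
    HasWalk R u w (j + k) := by
  induction k generalizing w with
  | zero => rwa [hasWalk_zero_iff.mp h₂] at h₁
  | succ k ih =>
    obtain ⟨x, hvx, hxw⟩ := hasWalk_succ_iff.mp h₂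
    exact hasWalk_succ_iff.mpr ⟨x, ih hvx, hxw⟩

variable (R) in
def closedWalkLengths (a : V) : AddSubmonoid ℕ where
  carrier := {k | HasWalk R a a k}
  zero_mem' := hasWalk_zero_iff.mpr rfl
  add_mem' := HasWalk.append_s2

@[simp]
theorem mem_closedWalkLengths {a : V} : k ∈ closedWalkLengths R a ↔ HasWalk R a a k := Iff.rfl

theorem HasWalk.apply_eq_add_natCast {A : Type*} [AddMonoidWithOne A] {φ : V → A}
    (hφ : ∀ u v, R u v → φ v = φ u + 1) (h : HasWalk R u v k) : φ v = φ u + k := by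
  induction k generalizing v with
  | zero => simp [hasWalk_zero_iff.mp h]
  | succ k ih =>
    obtain ⟨x, hux, hxv⟩ := hasWalk_succ_iff.mp h
    rw [hφ _ _ hxv, ih hux, Nat.cast_succ, add_assoc]

theorem dvd_of_dvd_short_closed_walks {D d m : ℕ} {a : V}
    (hdiam : ∀ u v : V, ∃ k ≤ D, HasWalk R u v k)
    (hd : ∀ k ≤ 2 * D + 1, HasWalk R a a k → d ∣ k) (hm : HasWalk R a a m) : d ∣ m := by
  choose p hpD hp using hdiam a
  choose q hqD hq using fun v => hdiam v a
  have hzero : ∀ k ≤ 2 * D + 1, HasWalk R a a k → (k : ZMod d) = 0 :=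
    fun k hk hw => (ZMod.natCast_eq_zero_iff _ _).mpr (hd k hk hw)
  have hedge : ∀ u w, R u w → -(q w : ZMod d) = -(q u : ZMod d) + 1 := by
    intro u w huw
    have h₁ := hzero _ (by grind) ((hp u).append_s2 (hq u))
    have h₂ := hzero _ (by grind) (((hp u).append_s2 (hasWalk_one_of_rel huw)).append_s2 (hq w))
    push_cast at h₁ h₂
    linear_combination h₁ - h₂
  have hm' := hm.apply_eq_add_natCast hedge
  exact (ZMod.natCast_eq_zero_iff _ _).mp (left_eq_add.mp hm')

end Walks

theorem AddSubgroup.mem_of_forall_nsmul_mem {Γ : Type*} [AddCommGroup Γ] {H : AddSubgroup Γ}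
    {x : Γ} {S : Set ℕ} (hS : ∀ d, (∀ g ∈ S, d ∣ g) → d = 1) (hx : ∀ g ∈ S, g • x ∈ H) :
    x ∈ H := by
  have h : addOrderOf (x : Γ ⧸ H) = 1 := hS _ fun g hg => addOrderOf_dvd_of_nsmul_eq_zero <| by
    rw [← QuotientAddGroup.mk_nsmul, QuotientAddGroup.eq_zero_iff]
    exact hx g hg
  rwa [AddMonoid.addOrderOf_eq_one_iff, QuotientAddGroup.eq_zero_iff] at h

namespace Finset

variable {Γ : Type*} [AddCommGroup Γ] [Fintype Γ] [DecidableEq Γ] {s t : Finset Γ}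

theorem eq_univ_of_add_eq_self (hs : AddSubgroup.closure (s : Set Γ) = ⊤) (ht : 0 ∈ t)
    (hts : t + s = t) : t = univ := by
  have hstab : AddSubgroup.closure (s : Set Γ) ≤ AddAction.stabilizer Γ t := by
    refine (AddSubgroup.closure_le _).mpr fun g hg => AddAction.mem_stabilizer_iff.mpr ?_
    refine eq_of_subset_of_card_le ?_ (card_vadd_finset g t).ge
    calc g +ᵥ t ⊆ s +ᵥ t := vadd_finset_subset_vadd hg
      _ = t := by rw [vadd_eq_add, add_comm, hts]
  refine eq_univ_of_forall fun y => ?_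
  have hy : y +ᵥ t = t := AddAction.mem_stabilizer_iff.mp (hstab (hs ▸ AddSubgroup.mem_top y))
  simpa [hy] using vadd_mem_vadd_finset (a := y) ht

theorem card_sub_one_nsmul_eq_univ_s2 (hs : AddSubgroup.closure (s : Set Γ) = ⊤) (hs₀ : 0 ∈ s) :
    (Fintype.card Γ - 1) • s = univ := by
  have hgrow : ∀ k, k + 1 ≤ #(k • s) ∨ k • s = univ := by
    intro k
    induction k with
    | zero => simp
    | succ k ih =>
      have hsub : k • s ⊆ (k + 1) • s := Finset.nsmul_right_monotone hs₀ k.le_succ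
      by_cases hstuck : (k + 1) • s = k • s
      · exact .inr <| hstuck.trans <|
          eq_univ_of_add_eq_self hs (zero_mem_nsmul hs₀) ((succ_nsmul s k).symm.trans hstuck)
      · rcases ih with ih | ih
        · exact .inl <| by grind [card_lt_card (hsub.ssubset_of_ne (Ne.symm hstuck))]
        · exact .inr <| univ_subset_iff.mp (ih ▸ hsub)
  rcases hgrow (Fintype.card Γ - 1) with h | h
  · exact eq_univ_of_card _ (le_antisymm (card_le_univ _) (by grind [Fintype.card_pos]))
  · exact h

end Finset

theorem mem_and_le_of_mem_nsmul {T : AddSubmonoid ℕ} {s : Finset ℕ} {M : ℕ}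
    (hs : ∀ g ∈ s, g ∈ T ∧ g ≤ M) {k B : ℕ} (hB : B ∈ k • s) : B ∈ T ∧ B ≤ k * M := by
  induction k generalizing B with
  | zero => simp_all [Finset.mem_zero, T.zero_mem]
  | succ k ih =>
    obtain ⟨x, hx, g, hg, rfl⟩ := Finset.mem_add.mp (succ_nsmul s k ▸ hB)
    exact ⟨T.add_mem (ih hx).1 (hs g hg).1, by grind [ih hx, hs g hg]⟩

theorem exists_mem_le_natCast_eq (T : AddSubmonoid ℕ) {L M : ℕ} [NeZero L] {G : Finset ℕ}
    (hGT : ∀ g ∈ G, g ∈ T ∧ g ≤ M) (hG : ∀ d, (∀ g ∈ G, d ∣ g) → d = 1) (r : ZMod L) :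
    ∃ B ∈ T, B ≤ (L - 1) * M ∧ (B : ZMod L) = r := by
  classical
  set s := (insert 0 G).image (Nat.castAddMonoidHom (ZMod L))
  have hone : (1 : ZMod L) ∈ AddSubgroup.closure (s : Set (ZMod L)) :=
    AddSubgroup.mem_of_forall_nsmul_mem (S := G) hG fun g hg =>
      AddSubgroup.subset_closure (Finset.mem_image.mpr ⟨g, Finset.mem_insert_of_mem hg, by simp⟩)
  have hs : AddSubgroup.closure (s : Set (ZMod L)) = ⊤ :=
    (AddSubgroup.eq_top_iff' _).mpr fun x => by simpa using AddSubgroup.nsmul_mem _ hone x.val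
  have hr : r ∈ ((L - 1) • insert 0 G).image (Nat.castAddMonoidHom (ZMod L)) := by
    have huniv := Finset.card_sub_one_nsmul_eq_univ_s2 hs (by simp [s])
    rw [ZMod.card] at huniv
    rw [Finset.image_nsmul, huniv]
    exact Finset.mem_univ r
  obtain ⟨B, hB, rfl⟩ := Finset.mem_image.mp hr
  have hins : ∀ g ∈ insert 0 G, g ∈ T ∧ g ≤ M := by
    simpa [T.zero_mem] using hGT
  obtain ⟨hBT, hBle⟩ := mem_and_le_of_mem_nsmul hins hB
  exact ⟨B, hBT, hBle, rfl⟩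

theorem exists_eq_add_mul_of_natCast_eq {L B n : ℕ} (h : (B : ZMod L) = n) (hB : B < n + L) :
    ∃ t, n = B + L * t := by
  have hmod : B ≡ n [MOD L] := (ZMod.natCast_eq_natCast_iff _ _ _).mp h
  have hle : B ≤ n := by
    by_contra! hlt
    have := Nat.le_of_dvd (by omega) ((Nat.modEq_iff_dvd' hlt.le).mp hmod.symm)
    omega
  obtain ⟨t, ht⟩ := (Nat.modEq_iff_dvd' hle).mp hmod
  exact ⟨t, by omega⟩

theorem closed_walk_of_every_length_general {V : Type*} (R : V → V → Prop) (D : ℕ)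
    (hout : ∀ u : V, ∃ v, R u v)
    (hdiam : ∀ u v : V, ∃ k ≤ D, HasWalk R u v k)
    (haper : ∀ (a : V) (d : ℕ), (∀ k, 0 < k → HasWalk R a a k → d ∣ k) → d = 1)
    (a : V) (n : ℕ) (hn : 2 * D ^ 2 ≤ n) :
    HasWalk R a a n := by
  classical
  obtain ⟨v, hav⟩ := hout a
  obtain ⟨k, hkD, hva⟩ := hdiam v a
  have hL : k + 1 ∈ closedWalkLengths R a := by
    simpa [add_comm] using (hasWalk_one_of_rel hav).append_s2 hva
  set G := (Finset.range (2 * D + 2)).filter (HasWalk R a a)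
  have hGT : ∀ g ∈ G, g ∈ closedWalkLengths R a ∧ g ≤ 2 * D + 1 := fun g hg => by
    rw [Finset.mem_filter, Finset.mem_range] at hg
    exact ⟨hg.2, by omega⟩
  have hG : ∀ d, (∀ g ∈ G, d ∣ g) → d = 1 := fun d hd =>
    haper a d fun m _ hm => dvd_of_dvd_short_closed_walks hdiam
      (fun g hg hw => hd g (Finset.mem_filter.mpr ⟨Finset.mem_range.mpr (by omega), hw⟩)) hm
  obtain ⟨B, hB, hBle, hBn⟩ := exists_mem_le_natCast_eq _ (L := k + 1) hGT hG n
  rw [Nat.add_sub_cancel] at hBle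
  obtain ⟨t, rfl⟩ := exists_eq_add_mul_of_natCast_eq hBn (by nlinarith)
  simpa [mul_comm] using add_mem hB (nsmul_mem hL t)

/-- In a finite, strongly connected, aperiodic directed graph of diameter at most `D`,
every vertex has a closed walk of every exact length `n ≥ 2D^2`. -/
theorem closed_walk_of_every_length {V : Type*} [Fintype V] (R : V → V → Prop) (D : ℕ)
    (hout : ∀ u : V, ∃ v, R u v)
    (hdiam : ∀ u v : V, ∃ k ≤ D, HasWalk R u v k)
    (haper : ∀ (a : V) (d : ℕ), (∀ k, 0 < k → HasWalk R a a k → d ∣ k) → d = 1)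
    (a : V) (n : ℕ) (hn : 2 * D ^ 2 ≤ n) :
    HasWalk R a a n :=
  closed_walk_of_every_length_general R D hout hdiam haper a n hn
end

section
/- In the transition system on {0,...,q-1} with primes p < q (T(0,L)=1, T(0,R)=q-p+1, T(x,·)=(x+1) mod q for x≠0): if x, x' are two states with x - x' ≡ (q-p)·((q-1)/2) (mod q), and both x and x' are reachable from state 0 by walks of the same length k, then k ≥ p(q-3)/2 + 1. -/
/-- The single-loop transition system on `ZMod q`. -/
def Tpq (p q : ℕ) (x : ZMod q) (a : Bool) : ZMod q :=
  if x = 0 then (if a then 1 else ((q - p + 1 : ℕ) : ZMod q)) else x + 1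

theorem HasWalk.eq_of_zero {V : Type*} {R : V → V → Prop} {u v : V} (h : HasWalk R u v 0) :
    u = v := by
  obtain ⟨f, hf0, hfk, -⟩ := h
  exact hf0.symm.trans hfk

theorem HasWalk.exists_of_succ {V : Type*} {R : V → V → Prop} {u w : V} {k : ℕ}
    (h : HasWalk R u w (k + 1)) : ∃ v, HasWalk R u v k ∧ R v w := by
  obtain ⟨f, hf0, hfk, hstep⟩ := h
  exact ⟨f k, ⟨f, hf0, rfl, fun i hi => hstep i (by omega)⟩, hfk ▸ hstep k k.lt_succ_self⟩

theorem ZMod.val_sub_one_of_ne_zero {n : ℕ} [NeZero n] {y : ZMod n} (hy : y ≠ 0) :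
    (y - 1).val = y.val - 1 := by
  have hpos : 0 < y.val := ZMod.val_pos.mpr hy
  have hy' : y - 1 = ((y.val - 1 : ℕ) : ZMod n) := by
    rw [Nat.cast_sub hpos, ZMod.natCast_zmod_val, Nat.cast_one]
  rw [hy', ZMod.val_cast_of_lt (by have := y.val_lt; omega)]

theorem le_max_of_natCast_sub_eq {n r r' t : ℕ} (h : (r : ZMod n) - r' = t) (ht : 2 * t ≤ n) :
    t ≤ max r r' := by
  by_contra! hlt
  have hr : r < t := (le_max_left r r').trans_lt hlt
  have hr' : r' < t := (le_max_right r r').trans_lt hlt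
  have hcast : (r : ZMod n) = ((r' + t : ℕ) : ZMod n) := by
    rw [Nat.cast_add, ← h, add_sub_cancel]
  have := (ZMod.natCast_eq_natCast_iff' r (r' + t) n).mp hcast
  rw [Nat.mod_eq_of_lt (by omega), Nat.mod_eq_of_lt (by omega)] at this
  omega

section SingleLoop

variable {p q : ℕ}

theorem Tpq_of_ne_zero {x : ZMod q} (hx : x ≠ 0) (a : Bool) : Tpq p q x a = x + 1 := by
  simp [Tpq, hx]

theorem Tpq_zero_true : Tpq p q 0 true = 1 := by simp [Tpq]

theorem Tpq_zero_false (hpq : p ≤ q) : Tpq p q 0 false = 1 - p := by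
  simp only [Tpq, ↓reduceIte, Bool.false_eq_true, Nat.cast_add, Nat.cast_sub hpq,
    ZMod.natCast_self, Nat.cast_one]
  ring

-- `(-x).val` is the number of `+1` steps from `x` back to `0`; the bound `p * r` is paid in
-- advance for at most `p - 1` of them.
theorem Tpq_step_invariant (hp : 0 < p) (hpq : p ≤ q) {k r : ℕ} {x : ZMod q}
    (hx : x = ((k + (q - p) * r : ℕ) : ZMod q)) (hr : p * r ≤ k + min (-x).val (p - 1))
    (a : Bool) : ∃ r' : ℕ, Tpq p q x a = ((k + 1 + (q - p) * r' : ℕ) : ZMod q) ∧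
      p * r' ≤ k + 1 + min (-Tpq p q x a).val (p - 1) := by
  have : NeZero q := ⟨by omega⟩
  by_cases h0 : x = 0
  · subst h0
    simp only [neg_zero, ZMod.val_zero, Nat.zero_min, add_zero] at hr
    cases a
    · refine ⟨r + 1, ?_, ?_⟩
      · rw [Tpq_zero_false hpq]
        push_cast [Nat.cast_sub hpq, ZMod.natCast_self] at hx ⊢
        linear_combination hx
      · have hval : (-Tpq p q 0 false).val = p - 1 := by
          rw [Tpq_zero_false hpq, neg_sub, ← Nat.cast_one, ← Nat.cast_sub hp,
            ZMod.val_cast_of_lt (by omega)]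
        rw [hval, Nat.min_self, Nat.mul_succ]
        omega
    · exact ⟨r, by rw [Tpq_zero_true]; push_cast at hx ⊢; linear_combination hx, by omega⟩
  · refine ⟨r, ?_, ?_⟩
    · rw [Tpq_of_ne_zero h0, hx]; push_cast; ring
    · have hval : (-Tpq p q x a).val = (-x).val - 1 := by
        rw [Tpq_of_ne_zero h0, neg_add, ← sub_eq_add_neg,
          ZMod.val_sub_one_of_ne_zero (neg_ne_zero.mpr h0)]
      rw [hval]
      omega

theorem exists_count_le_add_min_of_hasWalk (hp : 0 < p) (hpq : p ≤ q) {k : ℕ} {x : ZMod q}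
    (h : HasWalk (fun u v => ∃ a, Tpq p q u a = v) 0 x k) :
    ∃ r : ℕ, x = ((k + (q - p) * r : ℕ) : ZMod q) ∧ p * r ≤ k + min (-x).val (p - 1) := by
  induction k generalizing x with
  | zero => exact ⟨0, by simp [← h.eq_of_zero]⟩
  | succ k ih =>
    obtain ⟨y, hy, a, rfl⟩ := h.exists_of_succ
    obtain ⟨r, hyr, hr⟩ := ih hy
    exact Tpq_step_invariant hp hpq hyr hr a

theorem exists_count_le_of_hasWalk (hp : 0 < p) (hpq : p ≤ q) {k : ℕ} {x : ZMod q}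
    (h : HasWalk (fun u v => ∃ a, Tpq p q u a = v) 0 x k) :
    ∃ r : ℕ, x = ((k + (q - p) * r : ℕ) : ZMod q) ∧ p * r ≤ k + (p - 1) := by
  obtain ⟨r, hx, hr⟩ := exists_count_le_add_min_of_hasWalk hp hpq h
  exact ⟨r, hx, hr.trans (Nat.add_le_add_left (min_le_right _ _) k)⟩

end SingleLoop

/-- If two states differing by `(q-p)*((q-1)/2)` mod `q` are both reachable from state
`0` by walks of the same exact length `k`, then `k ≥ p(q-3)/2 + 1`. -/
theorem single_loop_large_witness_distance (p q : ℕ) (hp : Nat.Prime p)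
    (hq : Nat.Prime q) (hpq : p < q) (hodd : Odd q) (x x' : ZMod q)
    (hdiff : x - x' = (((q - p) * ((q - 1) / 2) : ℕ) : ZMod q)) (k : ℕ)
    (hx : HasWalk (fun u v => ∃ a, Tpq p q u a = v) 0 x k)
    (hx' : HasWalk (fun u v => ∃ a, Tpq p q u a = v) 0 x' k) :
    p * (q - 3) / 2 + 1 ≤ k := by
  have : Fact q.Prime := ⟨hq⟩
  have hp0 := hp.pos
  obtain ⟨r, rfl, hr⟩ := exists_count_le_of_hasWalk hp0 hpq.le hx
  obtain ⟨r', rfl, hr'⟩ := exists_count_le_of_hasWalk hp0 hpq.le hx'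
  have hunit : ((q - p : ℕ) : ZMod q) ≠ 0 := by
    rw [Ne, ZMod.natCast_eq_zero_iff]
    exact Nat.not_dvd_of_pos_of_lt (by omega) (by omega)
  have hcount : (r : ZMod q) - r' = ((q - 1) / 2 : ℕ) := by
    refine mul_left_cancel₀ hunit ?_
    push_cast at hdiff ⊢
    linear_combination hdiff
  have hmax := le_max_of_natCast_sub_eq hcount (by omega)
  have hbound : p * ((q - 1) / 2) ≤ k + (p - 1) :=
    (Nat.mul_le_mul_left p hmax).trans (max_rec' (fun m => p * m ≤ k + (p - 1)) hr hr')
  obtain ⟨s, rfl⟩ : ∃ s, q = 2 * s + 3 := ⟨(q - 3) / 2, by have := hq.two_le; grind⟩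
  rw [show 2 * s + 3 - 3 = 2 * s by omega, Nat.mul_left_comm, Nat.mul_div_cancel_left _ two_pos]
  rw [show (2 * s + 3 - 1) / 2 = s + 1 by omega, Nat.mul_succ] at hbound
  omega
end

section
/- Let T : X × A → X be a deterministic transition function on a finite state set X with finite action set A, such that for any policy assigning positive probability to every action in every state, the induced Markov chain on X is irreducible and aperiodic. Suppose X factors as an Ex-BMDP: there exist maps φ : X → S and φ_e : X → E with T-dynamics given by a deterministic action-dependent transition on S and an action-independent Markov transition on E, satisfying the block assumption (each x corresponds to a unique pair (φ(x), φ_e(x)) and distinct pairs yield distinct observations). Then |E| = 1, and φ is a bijection up to relabeling; i.e., the only valid endogenous encoder is the identity. -/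
section

variable {V W : Type*} {R : V → V → Prop} {g : V → W} {f : W → W}

theorem HasWalk.iterate_apply_eq (hg : ∀ x y, R x y → g y = f (g x)) {u v : V} {k : ℕ}
    (h : HasWalk R u v k) : f^[k] (g u) = g v := by
  obtain ⟨p, rfl, rfl, hstep⟩ := h
  suffices ∀ i ≤ k, f^[i] (g (p 0)) = g (p i) from this k le_rfl
  intro i hi
  induction i with
  | zero => rfl
  | succ i ih =>
    rw [Function.iterate_succ_apply', ih (by omega), hg _ _ (hstep i (by omega))]

theorem isFixedPt_of_forall_dvd_of_hasWalk (hg : ∀ x y, R x y → g y = f (g x)) {u : V}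
    (haper : ∀ d : ℕ, (∀ k, 0 < k → HasWalk R u u k → d ∣ k) → d = 1) :
    Function.IsFixedPt f (g u) :=
  Function.minimalPeriod_eq_one_iff_isFixedPt.mp <| haper _ fun _ _ hw =>
    Function.IsPeriodicPt.minimalPeriod_dvd (hw.iterate_apply_eq hg)

theorem HasWalk.apply_eq_of_isFixedPt (hg : ∀ x y, R x y → g y = f (g x)) {u v : V} {k : ℕ}
    (h : HasWalk R u v k) (hfix : Function.IsFixedPt f (g u)) : g v = g u := by
  rw [← h.iterate_apply_eq hg, hfix.iterate k]

end

theorem deterministic_aperiodic_trivial_exogenous_general {X S E A : Type*}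
    [Fintype E] [Nonempty X]
    (T : X → A → X)
    (hirr : ∀ u v : X, ∃ k, 0 < k ∧ HasWalk (fun x y => ∃ a, T x a = y) u v k)
    (haper : ∀ (u : X) (d : ℕ),
      (∀ k, 0 < k → HasWalk (fun x y => ∃ a, T x a = y) u u k → d ∣ k) → d = 1)
    (phi : X → S) (phie : X → E) (TE : E → E)
    (hblock : Function.Injective (fun x => (phi x, phie x)))
    (hsurjS : Function.Surjective phi) (hsurjE : Function.Surjective phie)
    (hTE : ∀ x a, phie (T x a) = TE (phie x)) :
    Fintype.card E = 1 ∧ Function.Bijective phi := by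
  obtain ⟨x₀⟩ := ‹Nonempty X›
  have hg : ∀ x y, (∃ a, T x a = y) → phie y = TE (phie x) := by
    rintro x _ ⟨a, rfl⟩
    exact hTE x a
  have hfix := isFixedPt_of_forall_dvd_of_hasWalk hg (haper x₀)
  have hconst : ∀ x, phie x = phie x₀ := fun x => by
    obtain ⟨k, -, hw⟩ := hirr x₀ x
    exact hw.apply_eq_of_isFixedPt hg hfix
  refine ⟨Fintype.card_eq_one_iff.mpr ⟨phie x₀, ?_⟩, ⟨fun x y hxy => hblock ?_, hsurjS⟩⟩
  · intro e
    obtain ⟨x, rfl⟩ := hsurjE e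
    exact hconst x
  · exact Prod.ext hxy ((hconst x).trans (hconst y).symm)

/-- For a deterministic, irreducible, aperiodic transition system admitting an
Ex-BMDP factorization (block assumption, deterministic endogenous dynamics,
action-independent exogenous dynamics), the exogenous part is trivial and the
endogenous encoder is a bijection: the only valid encoder is the identity. -/
theorem deterministic_aperiodic_trivial_exogenous {X S E A : Type*}
    [Fintype X] [Fintype S] [Fintype E] [Fintype A] [Nonempty X] [Nonempty A]
    (T : X → A → X)
    (hirr : ∀ u v : X, ∃ k, 0 < k ∧ HasWalk (fun x y => ∃ a, T x a = y) u v k)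
    (haper : ∀ (u : X) (d : ℕ),
      (∀ k, 0 < k → HasWalk (fun x y => ∃ a, T x a = y) u u k → d ∣ k) → d = 1)
    (phi : X → S) (phie : X → E) (TS : S → A → S) (TE : E → E)
    (hblock : Function.Injective (fun x => (phi x, phie x)))
    (hsurjS : Function.Surjective phi) (hsurjE : Function.Surjective phie)
    (hTS : ∀ x a, phi (T x a) = TS (phi x) a)
    (hTE : ∀ x a, phie (T x a) = TE (phie x)) :
    Fintype.card E = 1 ∧ Function.Bijective phi :=
  deterministic_aperiodic_trivial_exogenous_general T hirr haper phi phie TE hblock hsurjS hsurjE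
    hTE
end
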